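/- arXiv:1405.1859 — 2 statements merged into one kernel-verified Lean document; each statement's English description precedes it below -/
import Mathlib

section
/- Let A be a unital associative algebra over ℂ and let G be a finite group acting on A by unital algebra automorphisms. Let A^G = {a ∈ A | ∀ g ∈ G, g•a = a} be the fixed subalgebra, and let can_G : A ⊗_{A^G} A → (G → A) be the linear map determined on elementary tensors by can_G(a ⊗ b)(g) = a·(g•b). Then can_G is bijective if and only if there exist n ∈ ℕ and elements a₁,…,aₙ, b₁,…,bₙ ∈ A such that ∑_{i=1}^{n} aᵢ·bᵢ = 1 and, for every g ∈ G with g ≠ 1, ∑_{i=1}^{n} aᵢ·(g•bᵢ) = 0. -/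
open TensorProduct

/-- For a finite group `G` acting by unital `ℂ`-algebra automorphisms on a unital
associative `ℂ`-algebra `A`, the canonical map
`can_G : A ⊗_{A^G} A → (G → A)`, `a ⊗ b ↦ (g ↦ a * (g • b))`, is bijective iff there
are elements `a₁, …, aₙ, b₁, …, bₙ ∈ A` with `∑ aᵢ bᵢ = 1` and
`∑ aᵢ (g • bᵢ) = 0` for every nontrivial `g ∈ G`.  Here the balanced tensor product
`A ⊗_{A^G} A` is realized as the quotient of `A ⊗[ℂ] A` by the span of the elements
`(a * r) ⊗ b - a ⊗ (r * b)` with `r` a `G`-fixed element. -/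
theorem stmt_0 (A : Type*) [Ring A] [Algebra ℂ A]
    (G : Type*) [Group G] [Fintype G]
    [MulSemiringAction G A] [SMulCommClass G ℂ A]
    (rel : Submodule ℂ (A ⊗[ℂ] A))
    (hrel : rel = Submodule.span ℂ
      {x : A ⊗[ℂ] A | ∃ a b r : A, (∀ g : G, g • r = r) ∧
        x = (a * r) ⊗ₜ[ℂ] b - a ⊗ₜ[ℂ] (r * b)})
    (canG : ((A ⊗[ℂ] A) ⧸ rel) →ₗ[ℂ] (G → A))
    (hcan : ∀ a b : A,
      canG (Submodule.Quotient.mk (a ⊗ₜ[ℂ] b)) = fun g : G => a * (g • b)) :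
    Function.Bijective canG ↔
      ∃ (n : ℕ) (a b : Fin n → A),
        (∑ i, a i * b i = 1) ∧
        ∀ g : G, g ≠ 1 → ∑ i, a i * (g • b i) = 0 := by
  classical
  have hqt : ∀ a b : A, (canG ∘ₗ rel.mkQ) (a ⊗ₜ[ℂ] b) = fun g : G => a * (g • b) := by
    intro a b
    simpa [Submodule.mkQ_apply] using hcan a b
  constructor
  · rintro ⟨hinj, hsurj⟩
    obtain ⟨z, hz⟩ := hsurj (fun g => if g = 1 then (1 : A) else 0)
    obtain ⟨w, rfl⟩ := rel.mkQ_surjective z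
    obtain ⟨S, rfl⟩ := TensorProduct.exists_finset w
    have key : ∀ g : G, ∑ p ∈ S, p.1 * (g • p.2) = if g = 1 then (1 : A) else 0 := by
      intro g
      have h2 : (canG ∘ₗ rel.mkQ) (∑ p ∈ S, p.1 ⊗ₜ[ℂ] p.2) =
          fun g => if g = 1 then (1 : A) else 0 := hz
      rw [map_sum] at h2
      have := congrFun h2 g
      simpa [hqt, Finset.sum_apply] using this
    have conv : ∀ f : A × A → A,
        ∑ i : Fin S.card, f (S.equivFin.symm i : A × A) = ∑ p ∈ S, f p := by
      intro f
      rw [← Finset.sum_coe_sort S f]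
      exact Equiv.sum_comp S.equivFin.symm (fun p : S => f (p : A × A))
    refine ⟨S.card, fun i => (S.equivFin.symm i : A × A).1,
      fun i => (S.equivFin.symm i : A × A).2, ?_, ?_⟩
    · exact (conv (fun p => p.1 * p.2)).trans (by simpa using key 1)
    · intro g hg
      exact (conv (fun p => p.1 * (g • p.2))).trans (by simpa [hg] using key g)
  · rintro ⟨n, a, b, h1, h0⟩
    -- key identities
    have key1 : ∀ g h : G, ∑ i, (g • a i) * (h • b i) = if g = h then (1 : A) else 0 := by
      intro g h
      have hterm : ∀ i, (g • a i) * (h • b i) = g • (a i * ((g⁻¹ * h) • b i)) := by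
        intro i
        rw [smul_mul', smul_smul]
        simp
      rw [Finset.sum_congr rfl fun i _ => hterm i, ← Finset.smul_sum]
      by_cases hgh : g = h
      · subst hgh
        simp [h1]
      · rw [h0 (g⁻¹ * h) (by simpa [inv_mul_eq_one] using hgh)]
        simp [hgh]
    have key2 : ∀ g : G, ∑ i, (g • a i) * b i = if g = 1 then (1 : A) else 0 := by
      intro g
      simpa using key1 g 1
    -- the inverse map
    set ψ : (G → A) →ₗ[ℂ] ((A ⊗[ℂ] A) ⧸ rel) :=
      ∑ g : G, ∑ i : Fin n,
        rel.mkQ ∘ₗ ((TensorProduct.mk ℂ A A).flip (b i)) ∘ₗ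
          (LinearMap.mulRight ℂ (g • a i)) ∘ₗ (LinearMap.proj g) with hψ
    have hψapp : ∀ f : G → A,
        ψ f = rel.mkQ (∑ g : G, ∑ i : Fin n, (f g * (g • a i)) ⊗ₜ[ℂ] b i) := by
      intro f
      rw [hψ, map_sum]
      simp [LinearMap.sum_apply]
    constructor
    · -- injective: ψ ∘ canG = id
      have retr : ∀ x y : A, ψ ((canG ∘ₗ rel.mkQ) (x ⊗ₜ[ℂ] y)) = rel.mkQ (x ⊗ₜ[ℂ] y) := by
        intro x y
        rw [hqt, hψapp]
        set r : Fin n → A := fun i => ∑ g : G, g • (y * a i) with hr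
        have hfix : ∀ i, ∀ g' : G, g' • r i = r i := by
          intro i g'
          rw [hr]
          rw [Finset.smul_sum]
          exact Fintype.sum_equiv (Equiv.mulLeft g') _ _ (fun g => by
            simp [smul_smul])
        have hw : (∑ g : G, ∑ i : Fin n, ((x * (g • y)) * (g • a i)) ⊗ₜ[ℂ] b i)
            = ∑ i : Fin n, (x * r i) ⊗ₜ[ℂ] b i := by
          rw [Finset.sum_comm]
          refine Finset.sum_congr rfl fun i _ => ?_
          rw [← TensorProduct.sum_tmul]
          congr 1
          rw [hr, Finset.mul_sum]
          refine Finset.sum_congr rfl fun g _ => ?_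
          rw [smul_mul', mul_assoc]
        rw [hw, map_sum]
        have hstep : ∀ i, rel.mkQ ((x * r i) ⊗ₜ[ℂ] b i) = rel.mkQ (x ⊗ₜ[ℂ] (r i * b i)) := by
          intro i
          rw [Submodule.mkQ_apply, Submodule.mkQ_apply, Submodule.Quotient.eq, hrel]
          exact Submodule.subset_span ⟨x, b i, r i, hfix i, rfl⟩
        rw [Finset.sum_congr rfl fun i _ => hstep i, ← map_sum, ← TensorProduct.tmul_sum]
        congr 2
        have : ∀ i, r i * b i = ∑ g : G, (g • y) * ((g • a i) * b i) := by
          intro i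
          rw [hr, Finset.sum_mul]
          refine Finset.sum_congr rfl fun g _ => ?_
          rw [smul_mul', mul_assoc]
        rw [Finset.sum_congr rfl fun i _ => this i, Finset.sum_comm]
        calc ∑ g : G, ∑ i : Fin n, (g • y) * ((g • a i) * b i)
            = ∑ g : G, (g • y) * ∑ i : Fin n, (g • a i) * b i := by
              refine Finset.sum_congr rfl fun g _ => ?_
              rw [Finset.mul_sum]
          _ = ∑ g : G, (g • y) * (if g = 1 then (1 : A) else 0) := by
              refine Finset.sum_congr rfl fun g _ => ?_
              rw [key2]
          _ = y := by simp
      intro z₁ z₂ hz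
      obtain ⟨w₁, rfl⟩ := rel.mkQ_surjective z₁
      obtain ⟨w₂, rfl⟩ := rel.mkQ_surjective z₂
      have : (ψ ∘ₗ canG ∘ₗ rel.mkQ) = rel.mkQ := by
        apply TensorProduct.ext'
        intro x y
        simpa using retr x y
      have h₁ := LinearMap.congr_fun this w₁
      have h₂ := LinearMap.congr_fun this w₂
      simp only [LinearMap.comp_apply] at h₁ h₂
      calc rel.mkQ w₁ = ψ (canG (rel.mkQ w₁)) := h₁.symm
        _ = ψ (canG (rel.mkQ w₂)) := by rw [hz]
        _ = rel.mkQ w₂ := h₂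
    · -- surjective
      intro f
      refine ⟨ψ f, ?_⟩
      rw [hψapp, ← LinearMap.comp_apply canG rel.mkQ, map_sum]
      funext h
      have : ∀ g : G, (canG ∘ₗ rel.mkQ) (∑ i : Fin n, (f g * (g • a i)) ⊗ₜ[ℂ] b i) h
          = f g * (if g = h then (1 : A) else 0) := by
        intro g
        rw [map_sum]
        simp only [Finset.sum_apply, hqt]
        rw [← key1 g h, Finset.mul_sum]
        refine Finset.sum_congr rfl fun i _ => by rw [mul_assoc]
      simp only [Finset.sum_apply, this]
      simp
end

section
/- Let p : X̃ → X be a continuous map of topological spaces and let G be a group acting on X̃ by homeomorphisms with p(g•x̃) = p(x̃) for all g ∈ G and x̃ ∈ X̃. Let I be a countable index set, U : I → Set X a family of subsets, and a : I → (X → ℝ) a family of functions such that for each i: 0 ≤ aᵢ(x) for all x, and aᵢ(x) ≠ 0 implies x ∈ Uᵢ; assume that for every x ∈ X the family (aᵢ(x))_{i ∈ I} has sum 1 (HasSum). Let V : I → Set X̃ be a family of subsets such that for each i: p⁻¹(Uᵢ) ⊆ ⋃_{g ∈ G} g•Vᵢ, and (g•Vᵢ) ∩ (h•Vᵢ) =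 ∅ whenever g ≠ h. Define ξᵢ : X̃ → ℝ by ξᵢ(x̃) = √(aᵢ(p(x̃))) if x̃ ∈ Vᵢ and ξᵢ(x̃) = 0 otherwise. Then for every x̃ ∈ X̃, the family ((ξᵢ(g⁻¹•x̃))²)_{(g,i) ∈ G × I} has sum 1 (HasSum over G × I with value 1). -/
open scoped Classical Pointwise

/-- Lifting a partition of unity along a `G`-invariant map `p : X̃ → X`:
if `(aᵢ)` is a partition of unity on `X` subordinate to `(Uᵢ)`, and `(Vᵢ)` are subsets
of `X̃` whose `G`-translates cover `p⁻¹(Uᵢ)` and are pairwise disjoint, then for the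
lifted functions `ξᵢ = √(aᵢ ∘ p)·χ_{Vᵢ}` the family `((ξᵢ(g⁻¹ • x̃))²)_{(g,i)}`
has sum `1` at every point `x̃ ∈ X̃`. -/
theorem stmt_3 (X X' : Type*) [TopologicalSpace X] [TopologicalSpace X']
    (p : X' → X) (hp : Continuous p)
    (G : Type*) [Group G] [MulAction G X']
    (hhomeo : ∀ g : G, Continuous fun x : X' => g • x)
    (hinv : ∀ (g : G) (x : X'), p (g • x) = p x)
    (I : Type*) [Countable I]
    (U : I → Set X) (a : I → X → ℝ)
    (ha_nonneg : ∀ (i : I) (x : X), 0 ≤ a i x)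
    (ha_supp : ∀ (i : I) (x : X), a i x ≠ 0 → x ∈ U i)
    (ha_sum : ∀ x : X, HasSum (fun i : I => a i x) 1)
    (V : I → Set X')
    (hV_cover : ∀ i : I, p ⁻¹' (U i) ⊆ ⋃ g : G, g • V i)
    (hV_disj : ∀ (i : I) (g h : G), g ≠ h → (g • V i) ∩ (h • V i) = ∅)
    (ξ : I → X' → ℝ)
    (hξ : ∀ (i : I) (x : X'),
      ξ i x = if x ∈ V i then Real.sqrt (a i (p x)) else 0) :
    ∀ x : X', HasSum (fun gi : G × I => (ξ gi.2 (gi.1⁻¹ • x)) ^ 2) 1 := by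
  intro x
  have huniq : ∀ (i : I) (g h : G), g⁻¹ • x ∈ V i → h⁻¹ • x ∈ V i → g = h := by
    intro i g h hg hh
    by_contra hne
    have hx : x ∈ (g • V i) ∩ (h • V i) :=
      ⟨Set.mem_smul_set_iff_inv_smul_mem.mpr hg, Set.mem_smul_set_iff_inv_smul_mem.mpr hh⟩
    rw [hV_disj i g h hne] at hx
    exact hx
  -- choose a translate for each i
  let σ : I → G := fun i => if h : ∃ g : G, g⁻¹ • x ∈ V i then h.choose else 1
  let e : I → G × I := fun i => (σ i, i)
  have he : Function.Injective e := fun i j hij => congrArg Prod.snd hij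
  set f : G × I → ℝ := fun gi => (ξ gi.2 (gi.1⁻¹ • x)) ^ 2 with hf
  have hfval : ∀ (g : G) (i : I),
      f (g, i) = if g⁻¹ • x ∈ V i then a i (p x) else 0 := by
    intro g i
    simp only [hf, hξ]
    split_ifs with h
    · rw [Real.sq_sqrt (ha_nonneg i _), hinv]
    · simp
  have hzero : ∀ gi : G × I, gi ∉ Set.range e → f gi = 0 := by
    rintro ⟨g, i⟩ hgi
    rw [hfval]
    split_ifs with h
    · exfalso
      have hex : ∃ g : G, g⁻¹ • x ∈ V i := ⟨g, h⟩
      have hσ : (σ i)⁻¹ • x ∈ V i := by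
        simp only [σ, dif_pos hex]
        exact hex.choose_spec
      have : g = σ i := huniq i g (σ i) h hσ
      exact hgi ⟨i, by simp [e, this]⟩
    · rfl
  have hcomp : ∀ i : I, f (e i) = a i (p x) := by
    intro i
    rw [hfval]
    split_ifs with h
    · rfl
    · by_contra hne
      have hxa : a i (p x) ≠ 0 := fun h0 => hne h0.symm
      have hpx : x ∈ p ⁻¹' (U i) := ha_supp i (p x) hxa
      obtain ⟨g, hg⟩ := Set.mem_iUnion.mp (hV_cover i hpx)
      have hex : ∃ g' : G, g'⁻¹ • x ∈ V i :=
        ⟨g, Set.mem_smul_set_iff_inv_smul_mem.mp hg⟩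
      have hσ : (σ i)⁻¹ • x ∈ V i := by
        simp only [σ, dif_pos hex]
        exact hex.choose_spec
      exact h hσ
  rw [← Function.Injective.hasSum_iff he hzero]
  have : (f ∘ e) = fun i => a i (p x) := funext hcomp
  rw [this]
  exact ha_sum (p x)
end
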